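/- Let d ≥ 2 be an integer, G = (V,E) a finite d-claw free graph, w : V → ℝ positive, A* an independent set of maximum weight, and A an independent set such that no claw improves w²(A) (in particular A is maximal, so the charge map is defined). Then for each v ∈ A, ∑_{u∈A* : charge(u,v)>0} charge(u,v) ≤ w(v)/2. -/

import Mathlib

/-!
Let `T` be the set of `u ∈ A*` charging `v`, so `n(u) = v` for every `u ∈ T`. Since `A*` is
independent, `T` is either `{v}` or a claw centred at `v`, hence `w²(T) ≤ w²(N(T,A))`.
Covering `N(T,A)` by `v` and the sets `N(u,A) \ {v}`, and using that `v` is the heaviest vertex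
of each `N(u,A)`, gives `w²(T) ≤ w(v)² + ∑_{u∈T} (w(v) w(N(u,A)) - w(v)²)`.
Combined with `w(u)² ≥ 2 w(u) w(v) - w(v)²` and divided by `w(v)`, this is
`∑_{u∈T} (2 w(u) - w(N(u,A))) ≤ w(v)`.
-/

open Finset

open scoped Classical

variable {V : Type*}

noncomputable section

/-- Neighborhood of `U` in `W`: vertices of `W` that lie in `U` or are adjacent to some
vertex of `U`. -/
def nbhd (G : SimpleGraph V) (U W : Finset V) : Finset V :=
  W.filter (fun x => x ∈ U ∨ ∃ u ∈ U, G.Adj u x)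

/-- Neighborhood of a single vertex `u` in `W`. -/
def nbhd1 (G : SimpleGraph V) (u : V) (W : Finset V) : Finset V :=
  nbhd G {u} W

/-- Total weight of a finite set of vertices. -/
def wsum (w : V → ℝ) (U : Finset V) : ℝ := ∑ x ∈ U, w x

/-- Total squared weight of a finite set of vertices. -/
def wsq (w : V → ℝ) (U : Finset V) : ℝ := ∑ x ∈ U, (w x) ^ 2

/-- A finite set of vertices is independent. -/
def IsIndep (G : SimpleGraph V) (S : Finset V) : Prop :=
  ∀ a ∈ S, ∀ b ∈ S, a ≠ b → ¬ G.Adj a b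

/-- `G` is `d`-claw free: every independent subset of the neighborhood of any vertex has
size at most `d - 1`. -/
def ClawFree (G : SimpleGraph V) (d : ℕ) : Prop :=
  ∀ v : V, ∀ S : Finset V, (∀ x ∈ S, G.Adj v x) → IsIndep G S → S.card ≤ d - 1

/-- `X` is a local improvement of `w²(A)`. -/
def LocalImprovement (G : SimpleGraph V) (d : ℕ) (w : V → ℝ) (A X : Finset V) : Prop :=
  IsIndep G X ∧ X.card ≤ (d - 1) ^ 2 + (d - 1) ∧ wsq w (nbhd G X A) < wsq w X

/-- No claw improves `w²(A)`: `w²(T) ≤ w²(N(T,A))` for every independent set `T` that is a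
singleton or whose vertices are all adjacent to a common vertex. -/
def NoClawImproves (G : SimpleGraph V) (w : V → ℝ) (A : Finset V) : Prop :=
  ∀ T : Finset V, IsIndep G T → (T.card = 1 ∨ ∃ v : V, ∀ x ∈ T, G.Adj v x) →
    wsq w T ≤ wsq w (nbhd G T A)

/-- The charge map, relative to a choice `n` of heaviest neighbors. -/
def charge (G : SimpleGraph V) (w : V → ℝ) (A : Finset V) (n : V → V) (u v : V) : ℝ :=
  if v = n u then w u - wsum w (nbhd1 G u A) / 2 else 0

/-- `u ∈ T_v` is single (with `√ε = 1/2304`). -/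
def IsSingle (G : SimpleGraph V) (w : V → ℝ) (A : Finset V) (u v : V) : Prop :=
  (1 - 1 / 2304 : ℝ) ≤ w u / w v ∧ w u / w v ≤ 1 + 1 / 2304 ∧
  wsum w (nbhd1 G u A) ≤ (1 + 1 / 2304) * w v

/-- `u ∈ T_v` is double (with `√ε = 1/2304`). -/
def IsDouble (G : SimpleGraph V) (w : V → ℝ) (A : Finset V) (u v : V) : Prop :=
  2 ≤ (nbhd1 G u A).card ∧
  ∃ v₂ ∈ (nbhd1 G u A).erase v, (∀ x ∈ (nbhd1 G u A).erase v, w x ≤ w v₂) ∧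
    (1 - 1 / 2304 : ℝ) ≤ w u / w v ∧ w u / w v ≤ 1 + 1 / 2304 ∧
    (1 - 1 / 2304 : ℝ) ≤ w v₂ / w v ∧ w v₂ / w v ≤ 1 ∧
    (2 - 1 / 2304) * w v ≤ wsum w (nbhd1 G u A) ∧ wsum w (nbhd1 G u A) < 2 * w u

/-- The contribution map. -/
def contr (G : SimpleGraph V) (w : V → ℝ) (A : Finset V) (u v : V) : ℝ :=
  if v ∈ nbhd1 G u A then max 0 (((w u) ^ 2 - wsq w ((nbhd1 G u A).erase v)) / w v) else 0

lemma IsIndep.mono {G : SimpleGraph V} {S T : Finset V} (hS : IsIndep G S) (hTS : T ⊆ S) :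
    IsIndep G T :=
  fun a ha b hb => hS a (hTS ha) b (hTS hb)

lemma mem_nbhd1 {G : SimpleGraph V} {u x : V} {A : Finset V} :
    x ∈ nbhd1 G u A ↔ x ∈ A ∧ (x = u ∨ G.Adj u x) := by
  simp [nbhd1, nbhd]

lemma wsq_union_le (w : V → ℝ) (S₁ S₂ : Finset V) :
    wsq w (S₁ ∪ S₂) ≤ wsq w S₁ + wsq w S₂ := by
  have h : wsq w (S₁ ∪ S₂) + wsq w (S₁ ∩ S₂) = wsq w S₁ + wsq w S₂ := sum_union_inter
  have h₀ : 0 ≤ wsq w (S₁ ∩ S₂) := sum_nonneg fun _ _ => sq_nonneg _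
  linarith

lemma wsq_biUnion_le {ι : Type*} (w : V → ℝ) (T : Finset ι) (f : ι → Finset V) :
    wsq w (T.biUnion f) ≤ ∑ i ∈ T, wsq w (f i) :=
  sup_eq_biUnion T f ▸ T.apply_sup_le_sum rfl (wsq_union_le w _ _)

lemma wsq_le_mul_wsum {w : V → ℝ} {S : Finset V} {c : ℝ}
    (hS : ∀ x ∈ S, 0 ≤ w x ∧ w x ≤ c) : wsq w S ≤ c * wsum w S := by
  rw [wsq, wsum, mul_sum]
  refine sum_le_sum fun x hx => ?_
  obtain ⟨h₀, hc⟩ := hS x hx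
  nlinarith

lemma nbhd_subset_insert_biUnion_erase (G : SimpleGraph V) (T A : Finset V) (v : V) :
    nbhd G T A ⊆ insert v (T.biUnion fun u => (nbhd1 G u A).erase v) := by
  intro x hx
  obtain ⟨hxA, hxT | ⟨u, huT, hux⟩⟩ := mem_filter.mp hx
  all_goals
    rcases eq_or_ne x v with rfl | hxv
    · exact mem_insert_self _ _
    refine mem_insert_of_mem (mem_biUnion.mpr ?_)
  · exact ⟨x, hxT, mem_erase.mpr ⟨hxv, mem_nbhd1.mpr ⟨hxA, Or.inl rfl⟩⟩⟩
  · exact ⟨u, huT, mem_erase.mpr ⟨hxv, mem_nbhd1.mpr ⟨hxA, Or.inr hux⟩⟩⟩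

lemma wsq_nbhd_le {G : SimpleGraph V} (w : V → ℝ) {T A : Finset V} {v : V}
    (hv : ∀ u ∈ T, v ∈ nbhd1 G u A) :
    wsq w (nbhd G T A) ≤ w v ^ 2 + ∑ u ∈ T, (wsq w (nbhd1 G u A) - w v ^ 2) :=
  calc wsq w (nbhd G T A)
      ≤ wsq w ({v} ∪ T.biUnion fun u => (nbhd1 G u A).erase v) :=
        sum_le_sum_of_subset_of_nonneg (nbhd_subset_insert_biUnion_erase G T A v)
          fun _ _ _ => sq_nonneg _
    _ ≤ wsq w {v} + ∑ u ∈ T, wsq w ((nbhd1 G u A).erase v) :=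
        (wsq_union_le w _ _).trans (add_le_add_right (wsq_biUnion_le w _ _) _)
    _ = w v ^ 2 + ∑ u ∈ T, (wsq w (nbhd1 G u A) - w v ^ 2) := by
        rw [wsq, sum_singleton]
        exact congrArg _ (sum_congr rfl fun u hu => sum_erase_eq_sub (hv u hu))

lemma IsIndep.card_eq_one_or_exists_adj {G : SimpleGraph V} {T A : Finset V} {v : V}
    (hT : IsIndep G T) (hv : ∀ u ∈ T, v ∈ nbhd1 G u A) :
    T.card = 1 ∨ ∃ c, ∀ x ∈ T, G.Adj c x := by
  have hadj : ∀ u ∈ T, u ≠ v → G.Adj v u := fun u hu hne =>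
    ((mem_nbhd1.mp (hv u hu)).2.resolve_left hne.symm).symm
  by_cases hvT : v ∈ T
  · refine Or.inl (card_eq_one.mpr ⟨v, eq_singleton_iff_unique_mem.mpr ⟨hvT, fun u hu => ?_⟩⟩)
    by_contra hne
    exact hT u hu v hvT hne (hadj u hu hne).symm
  · exact Or.inr ⟨v, fun u hu => hadj u hu (ne_of_mem_of_not_mem hu hvT)⟩

lemma sum_sub_half_wsum_le {G : SimpleGraph V} {w : V → ℝ} (hw : ∀ x, 0 < w x)
    {T A : Finset V} {v : V} (hv : ∀ u ∈ T, v ∈ nbhd1 G u A)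
    (hmax : ∀ u ∈ T, ∀ x ∈ nbhd1 G u A, w x ≤ w v)
    (hT : wsq w T ≤ wsq w (nbhd G T A)) :
    ∑ u ∈ T, (w u - wsum w (nbhd1 G u A) / 2) ≤ w v / 2 := by
  have hu : ∀ u ∈ T, w v * (2 * (w u - wsum w (nbhd1 G u A) / 2)) ≤
      w u ^ 2 - (wsq w (nbhd1 G u A) - w v ^ 2) := fun u hu => by
    have := wsq_le_mul_wsum fun x hx => ⟨(hw x).le, hmax u hu x hx⟩
    nlinarith [sq_nonneg (w u - w v)]
  have key : w v * (2 * ∑ u ∈ T, (w u - wsum w (nbhd1 G u A) / 2)) ≤ w v * w v :=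
    calc w v * (2 * ∑ u ∈ T, (w u - wsum w (nbhd1 G u A) / 2))
        = ∑ u ∈ T, w v * (2 * (w u - wsum w (nbhd1 G u A) / 2)) := by rw [mul_sum, mul_sum]
      _ ≤ ∑ u ∈ T, (w u ^ 2 - (wsq w (nbhd1 G u A) - w v ^ 2)) := sum_le_sum hu
      _ = wsq w T - ∑ u ∈ T, (wsq w (nbhd1 G u A) - w v ^ 2) := sum_sub_distrib ..
      _ ≤ w v * w v := by linarith [hT.trans (wsq_nbhd_le w hv)]
  linarith [le_of_mul_le_mul_left key (hw v)]

theorem stmt5_general (G : SimpleGraph V)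
    (w : V → ℝ) (hw : ∀ v, 0 < w v) (Astar A : Finset V)
    (hAstarIndep : IsIndep G Astar)
    (hNoClaw : NoClawImproves G w A)
    (n : V → V)
    (hn : ∀ u ∈ Astar, n u ∈ nbhd1 G u A ∧ ∀ x ∈ nbhd1 G u A, w x ≤ w (n u)) :
    ∀ v ∈ A, ∑ u ∈ Astar.filter (fun u => 0 < charge G w A n u v), charge G w A n u v
      ≤ w v / 2 := by
  intro v _
  set T := Astar.filter (fun u => 0 < charge G w A n u v)
  have hTAstar : T ⊆ Astar := filter_subset _ _
  have hnT : ∀ u ∈ T, v = n u := fun u hu => by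
    by_contra h
    simpa [charge, h] using (mem_filter.mp hu).2
  have hTindep : IsIndep G T := hAstarIndep.mono hTAstar
  have hv : ∀ u ∈ T, v ∈ nbhd1 G u A := fun u hu => hnT u hu ▸ (hn u (hTAstar hu)).1
  have hmax : ∀ u ∈ T, ∀ x ∈ nbhd1 G u A, w x ≤ w v :=
    fun u hu => hnT u hu ▸ (hn u (hTAstar hu)).2
  calc ∑ u ∈ T, charge G w A n u v = ∑ u ∈ T, (w u - wsum w (nbhd1 G u A) / 2) :=
        sum_congr rfl fun u hu => if_pos (hnT u hu)
    _ ≤ w v / 2 := sum_sub_half_wsum_le hw hv hmax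
        (hNoClaw T hTindep (hTindep.card_eq_one_or_exists_adj hv))

theorem stmt5 [Fintype V] (G : SimpleGraph V) (d : ℕ) (hd : 2 ≤ d) (hG : ClawFree G d)
    (w : V → ℝ) (hw : ∀ v, 0 < w v) (Astar A : Finset V)
    (hAstarIndep : IsIndep G Astar)
    (hAstarMax : ∀ S : Finset V, IsIndep G S → wsum w S ≤ wsum w Astar)
    (hAIndep : IsIndep G A) (hAmax : ∀ v : V, (nbhd1 G v A).Nonempty)
    (hNoClaw : NoClawImproves G w A)
    (n : V → V)
    (hn : ∀ u ∈ Astar, n u ∈ nbhd1 G u A ∧ ∀ x ∈ nbhd1 G u A, w x ≤ w (n u)) :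
    ∀ v ∈ A, ∑ u ∈ Astar.filter (fun u => 0 < charge G w A n u v), charge G w A n u v
      ≤ w v / 2 :=
  stmt5_general G w hw Astar A hAstarIndep hNoClaw n hn

end
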